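/- arXiv:2603.27812 — 2 statements merged into one kernel-verified Lean document; each statement's English description precedes it below -/
import Mathlib

section
/- Any extreme point of the fractional matching polytope {x ∈ ℝ^E : x ≥ 0, Σ_{e ∈ δ(v)} x_e ≤ 1 for all v ∈ V} of a finite graph G is half-integral, i.e., every coordinate of an extreme point belongs to {0, 1/2, 1}. -/
open Finset

/-- The fractional matching polytope of a finite graph `G`, as a set of vectors
indexed by `Sym2 V` supported on the edge set: nonnegativity and degree constraints. -/
def fracMatchingPolytope {V : Type*} [Fintype V] [DecidableEq V]
    (G : SimpleGraph V) [DecidableRel G.Adj] : Set (Sym2 V → ℝ) :=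
  {x | (∀ e, 0 ≤ x e) ∧ (∀ e, e ∉ G.edgeFinset → x e = 0) ∧
    ∀ v : V, ∑ e ∈ G.edgeFinset.filter (fun e => v ∈ e), x e ≤ 1}

open Filter Topology

/-! Let `F` be the edges with `0 < x e < 1` and `T` the tight vertices meeting `F`. If `x` is
extreme, no nonzero `d` supported on `F` has vanishing sums at all vertices of `T`, since `x ± t d`
would stay in the polytope for small `t`; by linear algebra `#F ≤ #T`. Every vertex of `T` meets
at least two edges of `F`, while the `F`-degrees add up to `2 #F ≤ 2 #T`, so every vertex of `T`
meets exactly two edges of `F`, whose values sum to `1`. Hence `d = x - 1/2` on `F` is such a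
vector, and `x = 1/2` on `F`. -/

theorem eq_zero_of_add_mem_of_sub_mem_of_mem_extremePoints {𝕜 E : Type*} [Field 𝕜] [LinearOrder 𝕜]
    [IsStrictOrderedRing 𝕜] [AddCommGroup E] [Module 𝕜 E] {A : Set E} {x d : E}
    (hx : x ∈ A.extremePoints 𝕜) (h₁ : x + d ∈ A) (h₂ : x - d ∈ A) : d = 0 := by
  have hmid : x ∈ openSegment 𝕜 (x + d) (x - d) :=
    ⟨1 / 2, 1 / 2, by norm_num, by norm_num, by norm_num, by
      rw [← smul_add, add_add_sub_cancel, ← two_smul 𝕜 x, smul_smul]; norm_num⟩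
  simpa using hx.2 h₁ h₂ hmid

theorem Finset.card_le_card_of_forall_eq_zero {K ι κ : Type*} [Field K] [Fintype ι]
    (F : Finset ι) (T : Finset κ) (φ : κ → (ι → K) →ₗ[K] K)
    (h : ∀ d : ι → K, (∀ i ∉ F, d i = 0) → (∀ k ∈ T, φ k d = 0) → d = 0) : #F ≤ #T := by
  classical
  let Ψ : (ι → K) →ₗ[K] ({i // i ∉ F} → K) × (T → K) :=
    (LinearMap.pi fun i => LinearMap.proj i.1).prod (LinearMap.pi fun k => φ k.1)
  have hΨ : Function.Injective Ψ := by
    rw [← LinearMap.ker_eq_bot, LinearMap.ker_eq_bot']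
    intro d hd
    simp only [Ψ, LinearMap.prod_apply, Function.prod_apply, Prod.mk_eq_zero, funext_iff,
      LinearMap.pi_apply, LinearMap.coe_proj, Function.eval, Pi.zero_apply, Subtype.forall] at hd
    exact h d hd.1 hd.2
  have := LinearMap.finrank_le_finrank_of_injective hΨ
  simp only [Module.finrank_prod, Module.finrank_fintype_fun_eq_card, Fintype.card_coe,
    Fintype.card_subtype_compl] at this
  have := F.card_le_univ
  omega

theorem Finset.sum_card_filter_mem_eq_two_mul_card {V : Type*} [Fintype V] [DecidableEq V]
    (F : Finset (Sym2 V)) (hF : ∀ e ∈ F, ¬ e.IsDiag) :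
    ∑ v, #(F.filter (v ∈ ·)) = 2 * #F := by
  have := sum_card_bipartiteAbove_eq_sum_card_bipartiteBelow (s := univ) (t := F)
    (r := fun v e => v ∈ e)
  simp only [bipartiteAbove, bipartiteBelow] at this
  rw [this, mul_comm, ← smul_eq_mul, ← sum_const]
  refine sum_congr rfl fun e he => ?_
  rw [← Sym2.card_toFinset_of_not_isDiag e (hF e he)]
  congr 1; ext; simp [Sym2.mem_toFinset]

theorem Finset.one_lt_card_of_sum_eq_one {ι : Type*} {s : Finset ι} {f : ι → ℝ}
    (hf : ∀ i ∈ s, f i < 1) (hs : ∑ i ∈ s, f i = 1) : 1 < #s := by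
  by_contra! h
  obtain ⟨a, ha⟩ : s.Nonempty := nonempty_of_sum_ne_zero (by rw [hs]; exact one_ne_zero)
  rw [eq_singleton_iff_unique_mem.mpr ⟨ha, fun b hb => card_le_one_iff.mp h hb ha⟩,
    sum_singleton] at hs
  exact (hf a ha).ne hs

theorem Filter.eventually_lt_add_mul {a c : ℝ} (b : ℝ) (h : c < a) :
    ∀ᶠ t in 𝓝 0, c < a + t * b :=
  (continuous_const.add (continuous_id.mul continuous_const)).tendsto' 0 a (by simp)
    |>.eventually (lt_mem_nhds h)

section

variable {V : Type*} [Fintype V] [DecidableEq V] {G : SimpleGraph V} [DecidableRel G.Adj]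
  {x : Sym2 V → ℝ}

variable (G) in
noncomputable def fracEdges (x : Sym2 V → ℝ) : Finset (Sym2 V) :=
  G.edgeFinset.filter (fun e => 0 < x e ∧ x e < 1)

variable (G) in
noncomputable def tightFracVertices (x : Sym2 V → ℝ) : Finset V :=
  univ.filter fun v =>
    ∑ e ∈ G.edgeFinset.filter (v ∈ ·), x e = 1 ∧ ((fracEdges G x).filter (v ∈ ·)).Nonempty

theorem sum_filter_edgeFinset_eq_sum_filter_fracEdges {d : Sym2 V → ℝ}
    (hd : ∀ e ∉ fracEdges G x, d e = 0) (v : V) :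
    ∑ e ∈ G.edgeFinset.filter (v ∈ ·), d e = ∑ e ∈ (fracEdges G x).filter (v ∈ ·), d e :=
  (sum_subset (filter_subset_filter _ (filter_subset _ _)) fun e he heF =>
    hd e fun heF' => heF (mem_filter.mpr ⟨heF', (mem_filter.mp he).2⟩)).symm

namespace fracMatchingPolytope

theorem le_one (hx : x ∈ fracMatchingPolytope G) (e : Sym2 V) : x e ≤ 1 := by
  obtain ⟨hx₀, hxE, hxV⟩ := hx
  by_cases he : e ∈ G.edgeFinset
  · calc x e ≤ ∑ f ∈ G.edgeFinset.filter (e.out.1 ∈ ·), x f :=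
          single_le_sum (fun f _ => hx₀ f) (mem_filter.mpr ⟨he, Sym2.out_fst_mem e⟩)
      _ ≤ 1 := hxV _
  · simp [hxE e he]

theorem sum_fracEdges_eq_one (hx : x ∈ fracMatchingPolytope G) {v : V}
    (hv : v ∈ tightFracVertices G x) : ∑ e ∈ (fracEdges G x).filter (v ∈ ·), x e = 1 := by
  obtain ⟨hx₀, -, hxV⟩ := hx
  obtain ⟨-, hv, f, hf⟩ := mem_filter.mp hv
  obtain ⟨hfF, hvf⟩ := mem_filter.mp hf
  obtain ⟨hfE, hf₀, -⟩ := mem_filter.mp hfF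
  rw [← hv]
  refine sum_subset (filter_subset_filter _ (filter_subset _ _)) fun e he heF => ?_
  obtain ⟨heE, hve⟩ := mem_filter.mp he
  have hef : e ≠ f := by rintro rfl; exact heF hf
  have hlt : x e < 1 := by
    have := sum_le_sum_of_subset_of_nonneg (f := x)
      (insert_subset he (singleton_subset_iff.mpr (mem_filter.mpr ⟨hfE, hvf⟩)))
      (fun i _ _ => hx₀ i)
    rw [sum_pair hef] at this
    linarith [hxV v]
  refine ((hx₀ e).lt_or_eq.resolve_left fun he₀ => heF ?_).symm
  simp [fracEdges, heE, he₀, hlt, hve]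

theorem eventually_add_smul_mem (hx : x ∈ fracMatchingPolytope G) {d : Sym2 V → ℝ}
    (hd₀ : ∀ e, x e = 0 → d e = 0)
    (hd₁ : ∀ v, ∑ e ∈ G.edgeFinset.filter (v ∈ ·), x e = 1 →
      ∑ e ∈ G.edgeFinset.filter (v ∈ ·), d e = 0) :
    ∀ᶠ t in 𝓝 (0 : ℝ), x + t • d ∈ fracMatchingPolytope G := by
  obtain ⟨hx₀, hxE, hxV⟩ := hx
  simp only [fracMatchingPolytope, Set.mem_ofPred_eq, Pi.add_apply, Pi.smul_apply, smul_eq_mul,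
    sum_add_distrib, ← mul_sum]
  refine (eventually_all.mpr fun e => ?_).and
    ((eventually_all.mpr fun e => ?_).and (eventually_all.mpr fun v => ?_))
  · rcases (hx₀ e).lt_or_eq with he | he
    · exact (eventually_lt_add_mul (d e) he).mono fun t ht => ht.le
    · exact Eventually.of_forall fun t => by simp [← he, hd₀ e he.symm]
  · exact Eventually.of_forall fun t he => by simp [hxE e he, hd₀ e (hxE e he)]
  · rcases (hxV v).lt_or_eq with hv | hv
    · have := eventually_lt_add_mul (∑ e ∈ G.edgeFinset.filter (v ∈ ·), -d e) (neg_lt_neg hv)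
      exact this.mono fun t ht => by simp only [sum_neg_distrib] at ht; linarith
    · exact Eventually.of_forall fun t => by simp [hv, hd₁ v hv]

theorem eq_zero_of_mem_extremePoints (hx : x ∈ (fracMatchingPolytope G).extremePoints ℝ)
    {d : Sym2 V → ℝ} (hd₀ : ∀ e, x e = 0 → d e = 0)
    (hd₁ : ∀ v, ∑ e ∈ G.edgeFinset.filter (v ∈ ·), x e = 1 →
      ∑ e ∈ G.edgeFinset.filter (v ∈ ·), d e = 0) :
    d = 0 := by
  have h := eventually_add_smul_mem hx.1 hd₀ hd₁
  obtain ⟨t, ⟨ht₁, ht₂⟩, ht⟩ :=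
    ((h.and ((continuous_neg.tendsto' 0 0 neg_zero).eventually h)).filter_mono
      nhdsWithin_le_nhds |>.and self_mem_nhdsWithin).exists (f := 𝓝[≠] (0 : ℝ))
  rw [neg_smul, ← sub_eq_add_neg] at ht₂
  exact (smul_eq_zero.mp
    (eq_zero_of_add_mem_of_sub_mem_of_mem_extremePoints hx ht₁ ht₂)).resolve_left ht

theorem eq_zero_of_supported_fracEdges (hx : x ∈ (fracMatchingPolytope G).extremePoints ℝ)
    {d : Sym2 V → ℝ} (hdF : ∀ e ∉ fracEdges G x, d e = 0)
    (hdT : ∀ v ∈ tightFracVertices G x, ∑ e ∈ G.edgeFinset.filter (v ∈ ·), d e = 0) :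
    d = 0 := by
  refine eq_zero_of_mem_extremePoints hx (fun e he => hdF e fun heF => ?_) fun v hv => ?_
  · exact (mem_filter.mp heF).2.1.ne' he
  · by_cases hvF : ((fracEdges G x).filter (v ∈ ·)).Nonempty
    · exact hdT v (mem_filter.mpr ⟨mem_univ _, hv, hvF⟩)
    · rw [sum_filter_edgeFinset_eq_sum_filter_fracEdges hdF v,
        not_nonempty_iff_eq_empty.mp hvF, sum_empty]

theorem card_fracEdges_le (hx : x ∈ (fracMatchingPolytope G).extremePoints ℝ) :
    #(fracEdges G x) ≤ #(tightFracVertices G x) :=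
  card_le_card_of_forall_eq_zero _ _
    (fun v => ∑ e ∈ G.edgeFinset.filter (v ∈ ·), LinearMap.proj e)
    (by simpa using fun d => eq_zero_of_supported_fracEdges hx (d := d))

theorem card_filter_fracEdges_eq_two (hx : x ∈ (fracMatchingPolytope G).extremePoints ℝ) :
    ∀ v ∈ tightFracVertices G x, #((fracEdges G x).filter (v ∈ ·)) = 2 := by
  set F := fracEdges G x
  set T := tightFracVertices G x
  have hge : ∀ v ∈ T, 2 ≤ #(F.filter (v ∈ ·)) := fun v hv =>
    one_lt_card_of_sum_eq_one (fun e he => (mem_filter.mp (mem_filter.mp he).1).2.2)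
      (sum_fracEdges_eq_one hx.1 hv)
  have hle : ∑ v ∈ T, #(F.filter (v ∈ ·)) ≤ ∑ v ∈ T, 2 :=
    calc ∑ v ∈ T, #(F.filter (v ∈ ·)) ≤ ∑ v, #(F.filter (v ∈ ·)) :=
          sum_le_sum_of_subset (subset_univ T)
      _ = 2 * #F := sum_card_filter_mem_eq_two_mul_card F fun e he =>
          G.not_isDiag_of_mem_edgeSet (SimpleGraph.mem_edgeFinset.mp (mem_filter.mp he).1)
      _ ≤ ∑ v ∈ T, 2 := by rw [sum_const, smul_eq_mul]; linarith [card_fracEdges_le hx]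
  exact fun v hv => ((sum_eq_sum_iff_of_le hge).mp (le_antisymm (sum_le_sum hge) hle) v hv).symm

theorem fracEdges_eq_half (hx : x ∈ (fracMatchingPolytope G).extremePoints ℝ) {e : Sym2 V}
    (he : e ∈ fracEdges G x) : x e = 1 / 2 := by
  let d : Sym2 V → ℝ := fun e => if e ∈ fracEdges G x then x e - 1 / 2 else 0
  have hdF : ∀ e ∉ fracEdges G x, d e = 0 := fun e he => if_neg he
  have hd : d = 0 := eq_zero_of_supported_fracEdges hx hdF fun v hv => by
    rw [sum_filter_edgeFinset_eq_sum_filter_fracEdges hdF v,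
      sum_congr rfl fun e he => if_pos (mem_filter.mp he).1, sum_sub_distrib,
      sum_fracEdges_eq_one hx.1 hv, sum_const, card_filter_fracEdges_eq_two hx v hv]
    norm_num
  simpa [d, he, sub_eq_zero] using congrFun hd e

end fracMatchingPolytope

end

theorem stmt4 {V : Type*} [Fintype V] [DecidableEq V]
    (G : SimpleGraph V) [DecidableRel G.Adj]
    (x : Sym2 V → ℝ) (hx : x ∈ Set.extremePoints ℝ (fracMatchingPolytope G)) :
    ∀ e : Sym2 V, x e ∈ ({0, 1/2, 1} : Set ℝ) := by
  intro e
  obtain ⟨hx₀, hxE, -⟩ := hx.1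
  rcases (hx₀ e).lt_or_eq with h₀ | h₀
  · rcases (fracMatchingPolytope.le_one hx.1 e).lt_or_eq with h₁ | h₁
    · have heE : e ∈ G.edgeFinset := by_contra fun heE => h₀.ne' (hxE e heE)
      have heF : e ∈ fracEdges G x := mem_filter.mpr ⟨heE, h₀, h₁⟩
      exact Or.inr (Or.inl (fracMatchingPolytope.fracEdges_eq_half hx heF))
    · exact Or.inr (Or.inr h₁)
  · exact Or.inl h₀.symm
end

section
/- If x is any point of the fractional matching polytope of a finite graph G (i.e., x ≥ 0 and Σ_{e ∈ δ(v)} x_e ≤ 1 for all v), then the scaled vector (2/3)x lies in the matching polytope, i.e., (2/3)x is a convex combination of indicator vectors of matchings of G. -/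
open Finset

/-- `M` is a matching of `G`: a set of edges of `G` that are pairwise non-adjacent. -/
def IsMatchingFinset {V : Type*} (G : SimpleGraph V) (M : Finset (Sym2 V)) : Prop :=
  (∀ e ∈ M, e ∈ G.edgeSet) ∧
  ∀ e₁ ∈ M, ∀ e₂ ∈ M, e₁ ≠ e₂ → ∀ v : V, ¬(v ∈ e₁ ∧ v ∈ e₂)

/-- The matching polytope: the convex hull of indicator vectors of matchings of `G`. -/
noncomputable def matchingPolytope {V : Type*} [DecidableEq V]
    (G : SimpleGraph V) : Set (Sym2 V → ℝ) :=
  convexHull ℝ {x | ∃ M : Finset (Sym2 V), IsMatchingFinset G M ∧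
    x = fun e => if e ∈ M then (1:ℝ) else 0}

/-!
By separation it suffices to find, for weights `w ≥ 0`, a matching `M` with
`2 ∑ x w ≤ 3 w(M)`. The symmetric matrix `X a b = x(ab)` has row and column sums at most `1`,
so it lies below a doubly stochastic matrix, and Birkhoff's theorem gives a permutation `σ` with
`2 ∑ x w = ∑ X a b w(ab) ≤ ∑ₐ w(a σa)`. Each edge `a σa` meets at most three of these edges
(those indexed by `a`, `σ a`, `σ⁻¹ a`), so picking heaviest edges greedily yields a matching
carrying at least a third of their total weight.
-/

theorem mem_convexHull_of_forall_exists_le {ι : Type*} [Fintype ι] {S : Set (ι → ℝ)}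
    (hS : S.Finite) {y : ι → ℝ}
    (h : ∀ w : ι → ℝ, ∃ s ∈ S, ∑ i, y i * w i ≤ ∑ i, s i * w i) :
    y ∈ convexHull ℝ S := by
  classical
  by_contra hy
  obtain ⟨f, u, hfS, hfy⟩ :=
    geometric_hahn_banach_closed_point (convex_convexHull ℝ S) (hS.isClosed_convexHull ℝ) hy
  have hf : ∀ z : ι → ℝ, f z = ∑ i, z i * f (fun j => if i = j then 1 else 0) := fun z =>
    LinearMap.pi_apply_eq_sum_univ f.toLinearMap z
  obtain ⟨s, hs, hle⟩ := h fun i => f (fun j => if i = j then 1 else 0)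
  rw [← hf, ← hf] at hle
  exact (hfS s (subset_convexHull ℝ S hs)).not_ge (hfy.le.trans hle)

section DoublyStochastic

variable {R n : Type*} [Field R] [LinearOrder R] [IsStrictOrderedRing R] [Fintype n] [DecidableEq n]

theorem exists_mem_doublyStochastic_le (X : Matrix n n R) (hX : ∀ i j, 0 ≤ X i j)
    (hrow : ∀ i, ∑ j, X i j ≤ 1) (hcol : ∀ j, ∑ i, X i j ≤ 1) :
    ∃ D ∈ doublyStochastic R n, ∀ i j, X i j ≤ D i j := by
  set r : n → R := fun i => 1 - ∑ j, X i j
  set c : n → R := fun j => 1 - ∑ i, X i j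
  have hr : ∀ i, 0 ≤ r i := fun i => sub_nonneg.2 (hrow i)
  have hc : ∀ j, 0 ≤ c j := fun j => sub_nonneg.2 (hcol j)
  set s := ∑ i, r i
  have hcs : ∑ j, c j = s := by
    simp only [s, r, c, sum_sub_distrib]
    rw [sum_comm]
  have hs : 0 ≤ s := sum_nonneg fun i _ => hr i
  have hpad : ∀ i j, 0 ≤ r i * c j / s := fun i j => div_nonneg (mul_nonneg (hr i) (hc j)) hs
  -- Rows and columns fall short of `1` by the same total `s`; spread the deficits as
  -- `r i * c j / s`. If `s = 0` all deficits vanish, consistently with `/ 0 = 0`.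
  refine ⟨X + Matrix.of fun i j => r i * c j / s, ?_, fun i j => le_add_of_nonneg_right (hpad i j)⟩
  rw [mem_doublyStochastic_iff_sum]
  refine ⟨fun i j => add_nonneg (hX i j) (hpad i j), fun i => ?_, fun j => ?_⟩
  · have : r i * s / s = r i := by
      rcases hs.eq_or_lt with h | h
      · rw [(sum_eq_zero_iff_of_nonneg fun i _ => hr i).1 h.symm i (mem_univ i), zero_mul, zero_div]
      · exact mul_div_cancel_right₀ _ h.ne'
    simp only [Matrix.add_apply, Matrix.of_apply]
    rw [sum_add_distrib, ← sum_div, ← mul_sum, hcs, this, add_sub_cancel]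
  · have : s * c j / s = c j := by
      rcases hs.eq_or_lt with h | h
      · rw [← hcs] at h
        rw [(sum_eq_zero_iff_of_nonneg fun j _ => hc j).1 h.symm j (mem_univ j), mul_zero, zero_div]
      · exact mul_div_cancel_left₀ _ h.ne'
    simp only [Matrix.add_apply, Matrix.of_apply]
    rw [sum_add_distrib, ← sum_div, ← sum_mul, this, add_sub_cancel]

theorem exists_perm_sum_mul_le_of_mem_doublyStochastic {D : Matrix n n R}
    (hD : D ∈ doublyStochastic R n) (W : Matrix n n R) :
    ∃ σ : Equiv.Perm n, ∑ i, ∑ j, D i j * W i j ≤ ∑ i, W i (σ i) := by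
  obtain ⟨σ, -, hσ⟩ := exists_max_image univ (fun σ : Equiv.Perm n => ∑ i, W i (σ i)) univ_nonempty
  refine ⟨σ, ?_⟩
  have hlin : IsLinearMap R fun M : Matrix n n R => ∑ i, ∑ j, M i j * W i j :=
    ⟨fun M N => by simp [add_mul, sum_add_distrib], fun c M => by simp [mul_sum, mul_assoc]⟩
  rw [← SetLike.mem_coe, doublyStochastic_eq_convexHull_permMatrix] at hD
  refine convexHull_min ?_ (convex_halfSpace_le hlin _) hD
  rintro _ ⟨τ, rfl⟩
  simpa [Equiv.toPEquiv_apply] using hσ τ (mem_univ τ)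

theorem exists_perm_sum_mul_le (X W : Matrix n n R) (hX : ∀ i j, 0 ≤ X i j)
    (hrow : ∀ i, ∑ j, X i j ≤ 1) (hcol : ∀ j, ∑ i, X i j ≤ 1) (hW : ∀ i j, 0 ≤ W i j) :
    ∃ σ : Equiv.Perm n, ∑ i, ∑ j, X i j * W i j ≤ ∑ i, W i (σ i) := by
  obtain ⟨D, hD, hXD⟩ := exists_mem_doublyStochastic_le X hX hrow hcol
  obtain ⟨σ, hσ⟩ := exists_perm_sum_mul_le_of_mem_doublyStochastic hD W
  exact ⟨σ, le_trans (sum_le_sum fun i _ => sum_le_sum fun j _ =>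
    mul_le_mul_of_nonneg_right (hXD i j) (hW i j)) hσ⟩

end DoublyStochastic

section Matchings

variable {V : Type*}

theorem IsMatchingFinset.subset {G : SimpleGraph V} {M N : Finset (Sym2 V)}
    (hM : IsMatchingFinset G M) (hNM : N ⊆ M) : IsMatchingFinset G N :=
  ⟨fun e he => hM.1 e (hNM he), fun e₁ h₁ e₂ h₂ => hM.2 e₁ (hNM h₁) e₂ (hNM h₂)⟩

variable [Fintype V] [DecidableEq V]

theorem exists_matching_of_card_meeting_le {ι : Type*} [DecidableEq ι] (G : SimpleGraph V)
    (f : ι → Sym2 V) {w : Sym2 V → ℝ} (hw : ∀ e, 0 ≤ w e) (k : ℕ) (A : Finset ι)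
    (hA : ∀ a ∈ A, f a ∈ G.edgeSet)
    (hk : ∀ a ∈ A, #{b ∈ A | ∃ v, v ∈ f a ∧ v ∈ f b} ≤ k) :
    ∃ M ⊆ A.image f, IsMatchingFinset G M ∧ ∑ a ∈ A, w (f a) ≤ k * ∑ e ∈ M, w e := by
  induction A using Finset.strongInduction with | H A ih =>
  rcases A.eq_empty_or_nonempty with rfl | hne
  · exact ⟨∅, empty_subset _, ⟨by simp, by simp⟩, by simp⟩
  -- Keep an edge of maximal weight; the at most `k` edges meeting it weigh no more.
  obtain ⟨a, ha, hmax⟩ := exists_max_image A (w ∘ f) hne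
  set B := {b ∈ A | ∃ v, v ∈ f a ∧ v ∈ f b}
  obtain ⟨u, hu⟩ : ∃ u, u ∈ f a := Sym2.ind (fun u v => ⟨u, Sym2.mem_mk_left u v⟩) (f a)
  have haB : a ∈ B := mem_filter.2 ⟨ha, u, hu, hu⟩
  obtain ⟨M, hMA, ⟨hME, hMdisj⟩, hsum⟩ := ih (A \ B) (sdiff_ssubset (filter_subset _ _) ⟨a, haB⟩)
    (fun b hb => hA b (sdiff_subset hb))
    fun b hb => (card_le_card (filter_subset_filter _ sdiff_subset)).trans (hk b (sdiff_subset hb))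
  have hfar : ∀ e ∈ M, ∀ v, ¬(v ∈ f a ∧ v ∈ e) := by
    intro e he v hv
    obtain ⟨b, hb, rfl⟩ := mem_image.1 (hMA he)
    exact (mem_sdiff.1 hb).2 (mem_filter.2 ⟨(mem_sdiff.1 hb).1, v, hv⟩)
  have haM : f a ∉ M := fun h => hfar _ h u ⟨hu, hu⟩
  refine ⟨insert (f a) M, insert_subset (mem_image_of_mem f ha)
    (hMA.trans (image_subset_image sdiff_subset)), ⟨?_, ?_⟩, ?_⟩
  · simp only [mem_insert, forall_eq_or_imp]
    exact ⟨hA a ha, hME⟩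
  · simp only [mem_insert]
    rintro e₁ (rfl | he₁) e₂ (rfl | he₂) hne v hv
    · exact hne rfl
    · exact hfar e₂ he₂ v hv
    · exact hfar e₁ he₁ v hv.symm
    · exact hMdisj e₁ he₁ e₂ he₂ hne v hv
  · have hB : ∑ b ∈ B, w (f b) ≤ k * w (f a) :=
      calc ∑ b ∈ B, w (f b) ≤ #B • w (f a) :=
            sum_le_card_nsmul _ _ _ fun b hb => hmax b (filter_subset _ _ hb)
        _ ≤ k * w (f a) := by
          rw [nsmul_eq_mul]
          exact mul_le_mul_of_nonneg_right (by exact_mod_cast hk a ha) (hw _)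
    rw [← sum_sdiff (filter_subset _ A : B ⊆ A), sum_insert haM, mul_add]
    linarith

theorem card_filter_meets_perm_le_three (σ : Equiv.Perm V) (A : Finset V) (a : V) :
    #{b ∈ A | ∃ v, v ∈ s(a, σ a) ∧ v ∈ s(b, σ b)} ≤ 3 := by
  have hsub : {b ∈ A | ∃ v, v ∈ s(a, σ a) ∧ v ∈ s(b, σ b)} ⊆ {a, σ a, σ.symm a} := by
    intro b hb
    obtain ⟨-, v, hva, hvb⟩ := mem_filter.1 hb
    simp only [Sym2.mem_iff] at hva hvb
    simp only [mem_insert, mem_singleton]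
    rcases hva with rfl | rfl <;> rcases hvb with rfl | h
    · exact Or.inl rfl
    · exact Or.inr (Or.inr (by simp [h]))
    · exact Or.inr (Or.inl rfl)
    · exact Or.inl (σ.injective h).symm
  exact (card_le_card hsub).trans card_le_three

end Matchings

namespace SimpleGraph

variable {V : Type*} (G : SimpleGraph V) [DecidableRel G.Adj]

def edgeMatrix {R : Type*} [Zero R] (F : Sym2 V → R) : Matrix V V R :=
  Matrix.of fun a b => if G.Adj a b then F s(a, b) else 0

variable {G}

theorem edgeMatrix_nonneg {R : Type*} [Zero R] [Preorder R] {F : Sym2 V → R} (hF : ∀ e, 0 ≤ F e)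
    (a b : V) : 0 ≤ G.edgeMatrix F a b := by
  by_cases h : G.Adj a b <;> simp [edgeMatrix, h, hF]

theorem edgeMatrix_comm {R : Type*} [Zero R] (F : Sym2 V → R) (a b : V) :
    G.edgeMatrix F b a = G.edgeMatrix F a b := by
  simp [edgeMatrix, G.adj_comm, Sym2.eq_swap]

theorem edgeMatrix_mul_edgeMatrix {R : Type*} [MulZeroClass R] (F H : Sym2 V → R) (a b : V) :
    G.edgeMatrix F a b * G.edgeMatrix H a b = G.edgeMatrix (F * H) a b := by
  by_cases h : G.Adj a b <;> simp [edgeMatrix, h]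

variable [Fintype V] [DecidableEq V]

theorem sum_edgeMatrix_row {M : Type*} [AddCommMonoid M] (F : Sym2 V → M) (a : V) :
    ∑ b, G.edgeMatrix F a b = ∑ e ∈ G.edgeFinset with a ∈ e, F e := by
  have himg :
      ({b | G.Adj a b} : Finset V).image (fun b => s(a, b)) = {e ∈ G.edgeFinset | a ∈ e} := by
    ext e
    simp only [mem_image, mem_filter, mem_univ, true_and, mem_edgeFinset]
    constructor
    · rintro ⟨b, hb, rfl⟩
      exact ⟨hb, Sym2.mem_mk_left a b⟩
    · rintro ⟨he, ha⟩
      obtain ⟨b, rfl⟩ := Sym2.mem_iff_exists.1 ha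
      exact ⟨b, he, rfl⟩
  simp only [edgeMatrix, Matrix.of_apply]
  rw [← sum_filter, ← himg, sum_image fun b _ b' _ h => Sym2.congr_right.1 h]

theorem sum_sum_edgeMatrix {M : Type*} [AddCommMonoid M] (F : Sym2 V → M) :
    ∑ a, ∑ b, G.edgeMatrix F a b = 2 • ∑ e ∈ G.edgeFinset, F e := by
  simp only [sum_edgeMatrix_row, sum_filter]
  rw [sum_comm, smul_sum]
  refine sum_congr rfl fun e he => ?_
  have : ({a | a ∈ e} : Finset V) = e.toFinset := by ext; simp
  rw [← sum_filter, sum_const, this,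
    Sym2.card_toFinset_of_not_isDiag e (G.not_isDiag_of_mem_edgeFinset he)]

end SimpleGraph

section MatchingPolytope

open SimpleGraph

variable {V : Type*} [Fintype V] [DecidableEq V]

theorem mem_matchingPolytope_of_forall_exists_le (G : SimpleGraph V) {y : Sym2 V → ℝ}
    (hy : ∀ e, 0 ≤ y e)
    (h : ∀ w : Sym2 V → ℝ, (∀ e, 0 ≤ w e) →
      ∃ M, IsMatchingFinset G M ∧ ∑ e, y e * w e ≤ ∑ e ∈ M, w e) :
    y ∈ matchingPolytope G := by
  refine mem_convexHull_of_forall_exists_le ?_ fun w => ?_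
  · exact (Set.finite_range fun M : Finset (Sym2 V) => fun e => if e ∈ M then (1 : ℝ) else 0).subset
      fun _ ⟨M, _, hz⟩ => ⟨M, hz.symm⟩
  -- Matchings are closed under taking subsets, so edges of negative weight can be dropped.
  obtain ⟨M, hM, hle⟩ := h (fun e => max (w e) 0) fun e => le_max_right _ _
  refine ⟨_, ⟨{e ∈ M | 0 < w e}, hM.subset (filter_subset _ _), rfl⟩, ?_⟩
  calc ∑ e, y e * w e ≤ ∑ e, y e * max (w e) 0 :=
        sum_le_sum fun e _ => mul_le_mul_of_nonneg_left (le_max_left _ _) (hy e)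
    _ ≤ ∑ e ∈ M, max (w e) 0 := hle
    _ = ∑ e ∈ M with 0 < w e, w e := by
        rw [sum_filter]
        refine sum_congr rfl fun e _ => ?_
        split_ifs with h
        · exact max_eq_left h.le
        · exact max_eq_right (not_lt.1 h)
    _ = ∑ e, (if e ∈ {e ∈ M | 0 < w e} then 1 else 0) * w e := by
        simp only [ite_mul, one_mul, zero_mul, sum_ite_mem, univ_inter]

theorem exists_matching_two_mul_sum_le_three_mul {G : SimpleGraph V} [DecidableRel G.Adj]
    {x : Sym2 V → ℝ} (hx : x ∈ fracMatchingPolytope G) {w : Sym2 V → ℝ} (hw : ∀ e, 0 ≤ w e) :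
    ∃ M, IsMatchingFinset G M ∧ 2 * ∑ e, x e * w e ≤ 3 * ∑ e ∈ M, w e := by
  obtain ⟨hx0, hxE, hxv⟩ := hx
  have hrow : ∀ a, ∑ b, G.edgeMatrix x a b ≤ 1 := fun a => (sum_edgeMatrix_row x a).trans_le (hxv a)
  obtain ⟨σ, hσ⟩ := exists_perm_sum_mul_le (G.edgeMatrix x) (G.edgeMatrix w)
    (edgeMatrix_nonneg hx0) hrow (fun b => by simpa only [edgeMatrix_comm] using hrow b)
    (edgeMatrix_nonneg hw)
  obtain ⟨M, -, hM, hMw⟩ := exists_matching_of_card_meeting_le G (fun a => s(a, σ a)) hw 3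
    {a | G.Adj a (σ a)} (fun a ha => (mem_filter.1 ha).2)
    (fun a _ => card_filter_meets_perm_le_three σ _ a)
  refine ⟨M, hM, ?_⟩
  calc 2 * ∑ e, x e * w e = 2 * ∑ e ∈ G.edgeFinset, x e * w e := by
        rw [← sum_subset (subset_univ G.edgeFinset) fun e _ he => by rw [hxE e he, zero_mul]]
    _ = ∑ a, ∑ b, G.edgeMatrix x a b * G.edgeMatrix w a b := by
        simp only [edgeMatrix_mul_edgeMatrix, sum_sum_edgeMatrix, nsmul_eq_mul, Pi.mul_apply]
        norm_num
    _ ≤ ∑ a, G.edgeMatrix w a (σ a) := hσ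
    _ = ∑ a ∈ {a | G.Adj a (σ a)}, w s(a, σ a) := by simp [edgeMatrix, sum_filter]
    _ ≤ 3 * ∑ e ∈ M, w e := by exact_mod_cast hMw

end MatchingPolytope

theorem stmt5 {V : Type*} [Fintype V] [DecidableEq V]
    (G : SimpleGraph V) [DecidableRel G.Adj]
    (x : Sym2 V → ℝ) (hx : x ∈ fracMatchingPolytope G) :
    (fun e => (2/3 : ℝ) * x e) ∈ matchingPolytope G := by
  refine mem_matchingPolytope_of_forall_exists_le G (fun e => by have := hx.1 e; positivity)
    fun w hw => ?_
  obtain ⟨M, hM, hle⟩ := exists_matching_two_mul_sum_le_three_mul hx hw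
  refine ⟨M, hM, ?_⟩
  simp only [mul_assoc, ← mul_sum]
  linarith
end
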